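/- arXiv:2208.03010 — 12 statements merged into one kernel-verified Lean document; each statement's English description precedes it below -/
import Mathlib

section
/- Let (X,d) be a metric space and (x_k) a sequence in X. If (x_k) is A^I-statistically convergent to L₁ ∈ X and also A^I-statistically convergent to L₂ ∈ X, then L₁ = L₂ (uniqueness of the A^I-statistical limit; paper's Theorem 3.1). -/
open Filter Topology

/-- `A` is a nonnegative regular summability matrix. -/
structure RegularMatrix (A : ℕ → ℕ → ℝ) : Prop where
  nonneg : ∀ n k, 0 ≤ A n k
  summable : ∀ n, Summable (A n)
  bounded : ∃ C : ℝ, ∀ n, (∑' k, |A n k|) ≤ C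
  col_lim : ∀ k, Tendsto (fun n => A n k) atTop (𝓝 0)
  row_sum : Tendsto (fun n => ∑' k, A n k) atTop (𝓝 1)

/-- `I` is a non-trivial admissible ideal on ℕ. -/
structure AdmissibleIdeal (I : Set (Set ℕ)) : Prop where
  union_mem : ∀ {a b : Set ℕ}, a ∈ I → b ∈ I → a ∪ b ∈ I
  subset_mem : ∀ {a b : Set ℕ}, a ∈ I → b ⊆ a → b ∈ I
  finite_mem : ∀ {s : Set ℕ}, s.Finite → s ∈ I
  univ_not_mem : Set.univ ∉ I

/-- `I`-limit of a real sequence. -/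
def ILim (I : Set (Set ℕ)) (t : ℕ → ℝ) (L : ℝ) : Prop :=
  ∀ ε > 0, {n : ℕ | ε ≤ |t n - L|} ∈ I

/-- The set `M ⊆ ℕ` has `A^I`-density `δ`, i.e. `I-lim_n Σ_{k∈M} a_{nk} = δ`. -/
def AIDensity (I : Set (Set ℕ)) (A : ℕ → ℕ → ℝ) (M : Set ℕ) (δ : ℝ) : Prop :=
  ILim I (fun n => ∑' k, M.indicator (A n) k) δ

/-- `x` is `A^I`-statistically convergent to `L`. -/
def AIStatConv {X : Type*} [MetricSpace X] (I : Set (Set ℕ)) (A : ℕ → ℕ → ℝ)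
    (x : ℕ → X) (L : X) : Prop :=
  ∀ ε > 0, AIDensity I A {k : ℕ | ε ≤ dist (x k) L} 0

/-- `x` is `A^I`-statistically Cauchy. -/
def AIStatCauchy {X : Type*} [MetricSpace X] (I : Set (Set ℕ)) (A : ℕ → ℕ → ℝ)
    (x : ℕ → X) : Prop :=
  ∀ γ > 0, ∃ k₀ : ℕ, AIDensity I A {k : ℕ | γ ≤ dist (x k) (x k₀)} 0

/-- The additive property for `A^I`-density zero sets (AP`A^I`O). -/
def APAIO (I : Set (Set ℕ)) (A : ℕ → ℕ → ℝ) : Prop :=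
  ∀ G : ℕ → Set ℕ, Pairwise (Function.onFun Disjoint G) →
    (∀ j, AIDensity I A (G j) 0) →
    ∃ H : ℕ → Set ℕ, (∀ j, (symmDiff (G j) (H j)).Finite) ∧
      AIDensity I A (⋃ j, H j) 0

/-- The set of `A^I`-statistical limit points of `x`: points to which some
subsequence of `x`, indexed by an (automatically infinite) set of indices whose
`A^I`-density is not equal to `0` (nonzero or nonexistent), converges. -/
def AIStatLimitPts {X : Type*} [MetricSpace X] (I : Set (Set ℕ)) (A : ℕ → ℕ → ℝ)
    (x : ℕ → X) : Set X :=
  {ζ : X | ∃ f : ℕ → ℕ, StrictMono f ∧ ¬ AIDensity I A (Set.range f) 0 ∧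
    Tendsto (fun j => x (f j)) atTop (𝓝 ζ)}

/-- The set of `A^I`-statistical cluster points of `x`. -/
def AIStatClusterPts {X : Type*} [MetricSpace X] (I : Set (Set ℕ)) (A : ℕ → ℕ → ℝ)
    (x : ℕ → X) : Set X :=
  {ν : X | ∀ ε > 0, ¬ AIDensity I A {k : ℕ | dist (x k) ν < ε} 0}

/-- The set of ordinary limit points of `x` (limits of subsequences). -/
def LimitPts {X : Type*} [MetricSpace X] (x : ℕ → X) : Set X :=
  {ζ : X | ∃ f : ℕ → ℕ, StrictMono f ∧ Tendsto (fun j => x (f j)) atTop (𝓝 ζ)}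

theorem stmt_0 {X : Type*} [MetricSpace X] (A : ℕ → ℕ → ℝ) (I : Set (Set ℕ))
    (hA : RegularMatrix A) (hI : AdmissibleIdeal I) (x : ℕ → X) (L₁ L₂ : X)
    (h₁ : AIStatConv I A x L₁) (h₂ : AIStatConv I A x L₂) : L₁ = L₂ := by
  by_contra hne
  set ε := dist L₁ L₂ / 2 with hε
  have hd : 0 < dist L₁ L₂ := dist_pos.mpr hne
  have hεpos : 0 < ε := by positivity
  have hm1 := h₁ ε hεpos (1/4) (by norm_num)
  have hm2 := h₂ ε hεpos (1/4) (by norm_num)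
  -- the set where the row sums are not close to 1 is finite
  have hrow : ∀ᶠ n in atTop, |(∑' k, A n k) - 1| < 1/4 := by
    have := hA.row_sum
    rw [Metric.tendsto_atTop] at this
    obtain ⟨N, hN⟩ := this (1/4) (by norm_num)
    filter_upwards [eventually_ge_atTop N] with n hn
    simpa [Real.dist_eq] using hN n hn
  obtain ⟨N, hN⟩ := eventually_atTop.mp hrow
  have hfin : ({n : ℕ | (1:ℝ)/4 ≤ |(∑' k, A n k) - 1|} : Set ℕ) ∈ I := by
    apply hI.finite_mem
    apply Set.Finite.subset (Set.finite_Iio N)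
    intro n hn
    simp only [Set.mem_setOf_eq] at hn
    by_contra h
    exact absurd (hN n (le_of_not_gt h)) (not_lt.mpr hn)
  have hU : ({n : ℕ | (1:ℝ)/4 ≤ |(fun n => ∑' k, ({k : ℕ | ε ≤ dist (x k) L₁}).indicator (A n) k) n - 0|}
      ∪ {n : ℕ | (1:ℝ)/4 ≤ |(fun n => ∑' k, ({k : ℕ | ε ≤ dist (x k) L₂}).indicator (A n) k) n - 0|}
      ∪ {n : ℕ | (1:ℝ)/4 ≤ |(∑' k, A n k) - 1|}) ∈ I :=
    hI.union_mem (hI.union_mem hm1 hm2) hfin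
  have hne' : (({n : ℕ | (1:ℝ)/4 ≤ |(fun n => ∑' k, ({k : ℕ | ε ≤ dist (x k) L₁}).indicator (A n) k) n - 0|}
      ∪ {n : ℕ | (1:ℝ)/4 ≤ |(fun n => ∑' k, ({k : ℕ | ε ≤ dist (x k) L₂}).indicator (A n) k) n - 0|}
      ∪ {n : ℕ | (1:ℝ)/4 ≤ |(∑' k, A n k) - 1|}) : Set ℕ) ≠ Set.univ := by
    intro h
    exact hI.univ_not_mem (h ▸ hU)
  obtain ⟨n, hn⟩ := Set.ne_univ_iff_exists_notMem _ |>.mp hne'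
  simp only [Set.mem_union, Set.mem_setOf_eq, not_or, not_le] at hn
  obtain ⟨⟨hn1, hn2⟩, hn3⟩ := hn
  set M₁ := {k : ℕ | ε ≤ dist (x k) L₁}
  set M₂ := {k : ℕ | ε ≤ dist (x k) L₂}
  have hsum1 : Summable (M₁.indicator (A n)) :=
    (hA.summable n).indicator _
  have hsum2 : Summable (M₂.indicator (A n)) :=
    (hA.summable n).indicator _
  have hcover : ∀ k, A n k ≤ M₁.indicator (A n) k + M₂.indicator (A n) k := by
    intro k
    have hk : k ∈ M₁ ∪ M₂ := by
      by_contra hk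
      simp only [Set.mem_union, M₁, M₂, Set.mem_setOf_eq, not_or, not_le] at hk
      have := dist_triangle L₁ (x k) L₂
      rw [dist_comm L₁ (x k)] at this
      have : dist L₁ L₂ < ε + ε := lt_of_le_of_lt this (add_lt_add hk.1 hk.2)
      rw [hε] at this; linarith
    rcases hk with hk | hk
    · rw [Set.indicator_of_mem hk]
      have := Set.indicator_apply_nonneg (s := M₂) (f := A n) (a := k)
        (fun _ => hA.nonneg n k)
      linarith
    · rw [Set.indicator_of_mem hk]
      have := Set.indicator_apply_nonneg (s := M₁) (f := A n) (a := k)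
        (fun _ => hA.nonneg n k)
      linarith
  have hle : (∑' k, A n k) ≤ (∑' k, M₁.indicator (A n) k) + (∑' k, M₂.indicator (A n) k) := by
    rw [← Summable.tsum_add hsum1 hsum2]
    exact Summable.tsum_le_tsum hcover (hA.summable n) (hsum1.add hsum2)
  have h1' : (∑' k, M₁.indicator (A n) k) < 1/4 := by
    have := hn1
    rw [sub_zero, abs_lt] at this
    exact this.2
  have h2' : (∑' k, M₂.indicator (A n) k) < 1/4 := by
    have := hn2
    rw [sub_zero, abs_lt] at this
    exact this.2
  have h3' : (3:ℝ)/4 < ∑' k, A n k := by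
    rw [abs_lt] at hn3; linarith [hn3.1]
  linarith
end

section
/- Let (X,d) be a metric space and (x_k), (y_k) sequences in X. If (x_k) is A^I-statistically convergent to p ∈ X and (y_k) is A^I-statistically convergent to q ∈ X, then the real sequence (d(x_k,y_k)) is A^I-statistically convergent to d(p,q), i.e., for every ε > 0, δ_{A^I}({k : |d(x_k,y_k) − d(p,q)| ≥ ε}) = 0 (paper's Theorem 3.2). -/
open Filter Topology

theorem stmt_1 {X : Type*} [MetricSpace X] (A : ℕ → ℕ → ℝ) (I : Set (Set ℕ))
    (hA : RegularMatrix A) (hI : AdmissibleIdeal I) (x y : ℕ → X) (p q : X)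
    (hx : AIStatConv I A x p) (hy : AIStatConv I A y q) :
    AIStatConv I A (fun k => dist (x k) (y k)) (dist p q) := by
  intro ε hε ε' hε'
  have hε2 : (0:ℝ) < ε / 2 := by linarith
  have h1 := hx (ε/2) hε2 (ε'/2) (by linarith)
  have h2 := hy (ε/2) hε2 (ε'/2) (by linarith)
  refine hI.subset_mem (hI.union_mem h1 h2) ?_
  intro n hn
  set B : Set ℕ := {k : ℕ | ε ≤ |dist (x k) (y k) - dist p q|}
  set S1 : Set ℕ := {k : ℕ | ε/2 ≤ dist (x k) p}
  set S2 : Set ℕ := {k : ℕ | ε/2 ≤ dist (y k) q}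
  have hsub : ∀ k, B.indicator (A n) k ≤ S1.indicator (A n) k + S2.indicator (A n) k := by
    intro k
    by_cases hk : k ∈ B
    · rw [Set.indicator_of_mem hk]
      have htri : |dist (x k) (y k) - dist p q| ≤ dist (x k) p + dist (y k) q := by
        have := dist_dist_dist_le (x k) (y k) p q
        rwa [Real.dist_eq] at this
      have hkB : ε ≤ |dist (x k) (y k) - dist p q| := hk
      have : k ∈ S1 ∨ k ∈ S2 := by
        by_contra hc
        push_neg at hc
        simp only [S1, S2, Set.mem_setOf_eq, not_le] at hc
        linarith [hc.1, hc.2]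
      rcases this with h | h
      · rw [Set.indicator_of_mem h]
        have := Set.indicator_nonneg (fun i _ => hA.nonneg n i) (a := k) (s := S2)
        linarith
      · rw [Set.indicator_of_mem h]
        have := Set.indicator_nonneg (fun i _ => hA.nonneg n i) (a := k) (s := S1)
        linarith
    · rw [Set.indicator_of_notMem hk]
      have h1' := Set.indicator_nonneg (fun i _ => hA.nonneg n i) (a := k) (s := S1)
      have h2' := Set.indicator_nonneg (fun i _ => hA.nonneg n i) (a := k) (s := S2)
      linarith
  have sB : Summable (B.indicator (A n)) := (hA.summable n).indicator B
  have sS1 : Summable (S1.indicator (A n)) := (hA.summable n).indicator S1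
  have sS2 : Summable (S2.indicator (A n)) := (hA.summable n).indicator S2
  have htsum : (∑' k, B.indicator (A n) k) ≤
      (∑' k, S1.indicator (A n) k) + (∑' k, S2.indicator (A n) k) := by
    calc (∑' k, B.indicator (A n) k)
        ≤ ∑' k, (S1.indicator (A n) k + S2.indicator (A n) k) :=
          Summable.tsum_le_tsum hsub sB (sS1.add sS2)
      _ = _ := Summable.tsum_add sS1 sS2
  have hBnn : 0 ≤ ∑' k, B.indicator (A n) k :=
    tsum_nonneg fun k => Set.indicator_nonneg (fun i _ => hA.nonneg n i) k
  have hS1nn : 0 ≤ ∑' k, S1.indicator (A n) k :=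
    tsum_nonneg fun k => Set.indicator_nonneg (fun i _ => hA.nonneg n i) k
  have hS2nn : 0 ≤ ∑' k, S2.indicator (A n) k :=
    tsum_nonneg fun k => Set.indicator_nonneg (fun i _ => hA.nonneg n i) k
  have hnB : ε' ≤ |(∑' k, B.indicator (A n) k) - 0| := hn
  rw [sub_zero, abs_of_nonneg hBnn] at hnB
  by_cases hc : ε'/2 ≤ ∑' k, S1.indicator (A n) k
  · left
    show ε'/2 ≤ |(∑' k, S1.indicator (A n) k) - 0|
    rwa [sub_zero, abs_of_nonneg hS1nn]
  · right
    show ε'/2 ≤ |(∑' k, S2.indicator (A n) k) - 0|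
    rw [sub_zero, abs_of_nonneg hS2nn]
    push_neg at hc
    linarith
end

section
/- Let (X,d) be a metric space, (x_k) a sequence in X, and suppose δ_{A^I} satisfies property AP A^I O. Then (x_k) is A^I-statistically convergent to L ∈ X if and only if (x_k) is A^{I*}-statistically convergent to L, i.e., if and only if there exists an infinite set M ⊆ ℕ with δ_{A^I}(M) = 1 such that the subsequence of (x_k) indexed by the elements of M in increasing order converges to L in the usual sense (paper's Theorem 3.4). -/
open Filter Topology

section Helpers

variable {I : Set (Set ℕ)} {A : ℕ → ℕ → ℝ}

lemma ilim_of_tendsto (hI : AdmissibleIdeal I) {t : ℕ → ℝ} {L : ℝ}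
    (h : Tendsto t atTop (𝓝 L)) : ILim I t L := by
  intro ε hε
  obtain ⟨N, hN⟩ := (Metric.tendsto_atTop.1 h) ε hε
  apply hI.finite_mem
  apply Set.Finite.subset (Set.finite_Iio N)
  intro n hn
  by_contra hlt
  simp only [Set.mem_Iio, not_lt] at hlt
  have := hN n hlt
  rw [Real.dist_eq] at this
  exact absurd hn.out (not_le.2 this)

lemma ilim_sub (hI : AdmissibleIdeal I) {t u : ℕ → ℝ} {a b : ℝ}
    (ht : ILim I t a) (hu : ILim I u b) :
    ILim I (fun n => t n - u n) (a - b) := by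
  intro ε hε
  have h1 := ht (ε/2) (by linarith)
  have h2 := hu (ε/2) (by linarith)
  apply hI.subset_mem (hI.union_mem h1 h2)
  intro n hn
  simp only [Set.mem_setOf_eq] at hn ⊢
  by_contra hc
  simp only [Set.mem_union, Set.mem_setOf_eq, not_or, not_le] at hc
  obtain ⟨hc1, hc2⟩ := hc
  have : |t n - u n - (a - b)| ≤ |t n - a| + |u n - b| := by
    calc |t n - u n - (a - b)| = |(t n - a) - (u n - b)| := by ring_nf
    _ ≤ |t n - a| + |u n - b| := abs_sub _ _
  linarith

lemma ilim_add (hI : AdmissibleIdeal I) {t u : ℕ → ℝ} {a b : ℝ}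
    (ht : ILim I t a) (hu : ILim I u b) :
    ILim I (fun n => t n + u n) (a + b) := by
  intro ε hε
  have h1 := ht (ε/2) (by linarith)
  have h2 := hu (ε/2) (by linarith)
  apply hI.subset_mem (hI.union_mem h1 h2)
  intro n hn
  simp only [Set.mem_setOf_eq] at hn ⊢
  by_contra hc
  simp only [Set.mem_union, Set.mem_setOf_eq, not_or, not_le] at hc
  obtain ⟨hc1, hc2⟩ := hc
  have : |t n + u n - (a + b)| ≤ |t n - a| + |u n - b| := by
    calc |t n + u n - (a + b)| = |(t n - a) + (u n - b)| := by ring_nf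
    _ ≤ |t n - a| + |u n - b| := abs_add_le _ _
  linarith

lemma ilim_squeeze0 (hI : AdmissibleIdeal I) {t u : ℕ → ℝ}
    (h0 : ∀ n, 0 ≤ t n) (hle : ∀ n, t n ≤ u n)
    (hu : ILim I u 0) : ILim I t 0 := by
  intro ε hε
  apply hI.subset_mem (hu ε hε)
  intro n hn
  simp only [Set.mem_setOf_eq, sub_zero] at hn ⊢
  rw [abs_of_nonneg (h0 n)] at hn
  exact hn.trans ((hle n).trans (le_abs_self _))

lemma ilim_unique (hI : AdmissibleIdeal I) {t : ℕ → ℝ} {a b : ℝ}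
    (ha : ILim I t a) (hb : ILim I t b) : a = b := by
  by_contra hne
  have hd : 0 < |a - b| / 2 := by
    have : a - b ≠ 0 := sub_ne_zero.2 hne
    positivity
  have h1 := ha _ hd
  have h2 := hb _ hd
  apply hI.univ_not_mem
  apply hI.subset_mem (hI.union_mem h1 h2)
  intro n _
  by_contra hc
  simp only [Set.mem_union, Set.mem_setOf_eq, not_or, not_le] at hc
  have h3 : |a - b| ≤ |t n - a| + |t n - b| := by
    calc |a - b| = |(t n - b) - (t n - a)| := by ring_nf
    _ ≤ |t n - b| + |t n - a| := abs_sub _ _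
    _ = |t n - a| + |t n - b| := by ring
  linarith [hc.1, hc.2]

lemma dens_nonneg (hA : RegularMatrix A) (S : Set ℕ) (n : ℕ) :
    0 ≤ ∑' k, S.indicator (A n) k :=
  tsum_nonneg fun k => Set.indicator_nonneg (fun a _ => hA.nonneg n a) k

lemma dens_mono (hA : RegularMatrix A) (hI : AdmissibleIdeal I) {S T : Set ℕ}
    (hST : S ⊆ T) (hT : AIDensity I A T 0) : AIDensity I A S 0 := by
  refine ilim_squeeze0 hI (dens_nonneg hA S) (fun n => ?_) hT
  exact Summable.tsum_le_tsum
    (fun k => Set.indicator_le_indicator_of_subset hST (hA.nonneg n) k)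
    ((hA.summable n).indicator S) ((hA.summable n).indicator T)

lemma dens_union0 (hA : RegularMatrix A) (hI : AdmissibleIdeal I) {S T : Set ℕ}
    (hS : AIDensity I A S 0) (hT : AIDensity I A T 0) :
    AIDensity I A (S ∪ T) 0 := by
  have hadd := ilim_add hI hS hT
  refine ilim_squeeze0 hI (dens_nonneg hA _) (fun n => ?_) (by simpa using hadd)
  have hpt : ∀ k, (S ∪ T).indicator (A n) k ≤ S.indicator (A n) k + T.indicator (A n) k := by
    intro k
    have hSn : 0 ≤ S.indicator (A n) k := Set.indicator_nonneg (fun a _ => hA.nonneg n a) k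
    have hTn : 0 ≤ T.indicator (A n) k := Set.indicator_nonneg (fun a _ => hA.nonneg n a) k
    by_cases hkS : k ∈ S
    · rw [Set.indicator_of_mem (Set.mem_union_left _ hkS), Set.indicator_of_mem hkS]
      linarith
    · by_cases hkT : k ∈ T
      · rw [Set.indicator_of_mem (Set.mem_union_right _ hkT),
          Set.indicator_of_notMem hkS, Set.indicator_of_mem hkT]
        linarith
      · rw [Set.indicator_of_notMem (by simp [hkS, hkT]),
          Set.indicator_of_notMem hkS, Set.indicator_of_notMem hkT]
        linarith
  calc (∑' k, (S ∪ T).indicator (A n) k)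
      ≤ ∑' k, (S.indicator (A n) k + T.indicator (A n) k) :=
        Summable.tsum_le_tsum hpt ((hA.summable n).indicator _)
          (((hA.summable n).indicator S).add ((hA.summable n).indicator T))
    _ = (∑' k, S.indicator (A n) k) + ∑' k, T.indicator (A n) k :=
        Summable.tsum_add ((hA.summable n).indicator S) ((hA.summable n).indicator T)

lemma dens_finite0 (hA : RegularMatrix A) (hI : AdmissibleIdeal I) {F : Set ℕ}
    (hF : F.Finite) : AIDensity I A F 0 := by
  apply ilim_of_tendsto hI
  have hkey : ∀ n, (∑' k, F.indicator (A n) k) = ∑ k ∈ hF.toFinset, A n k := by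
    intro n
    rw [tsum_eq_sum (s := hF.toFinset)
      (fun k hk => Set.indicator_of_notMem (by simpa using hk) _)]
    exact Finset.sum_congr rfl fun k hk =>
      Set.indicator_of_mem (by simpa using hk) _
  have : Tendsto (fun n => ∑ k ∈ hF.toFinset, A n k) atTop (𝓝 0) := by
    have := tendsto_finset_sum hF.toFinset (fun k _ => hA.col_lim k)
    simpa using this
  exact Tendsto.congr (fun n => (hkey n).symm) this

lemma dens_compl (hA : RegularMatrix A) (hI : AdmissibleIdeal I) {S : Set ℕ} {δ : ℝ}
    (h : AIDensity I A S δ) : AIDensity I A Sᶜ (1 - δ) := by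
  have hkey : (fun n => ∑' k, Sᶜ.indicator (A n) k)
      = fun n => (∑' k, A n k) - ∑' k, S.indicator (A n) k := by
    funext n
    rw [Set.indicator_compl]
    exact Summable.tsum_sub (hA.summable n) ((hA.summable n).indicator S)
  rw [AIDensity, hkey]
  exact ilim_sub hI (ilim_of_tendsto hI hA.row_sum) h

end Helpers

theorem stmt_3 {X : Type*} [MetricSpace X] (A : ℕ → ℕ → ℝ) (I : Set (Set ℕ))
    (hA : RegularMatrix A) (hI : AdmissibleIdeal I) (hAP : APAIO I A)
    (x : ℕ → X) (L : X) :
    AIStatConv I A x L ↔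
      ∃ f : ℕ → ℕ, StrictMono f ∧ AIDensity I A (Set.range f) 1 ∧
        Tendsto (fun j => x (f j)) atTop (𝓝 L) := by
  constructor
  · -- forward direction
    intro h
    set S : ℕ → Set ℕ := fun j => {k | ((j : ℝ) + 1)⁻¹ ≤ dist (x k) L} with hS
    have hSdens : ∀ j, AIDensity I A (S j) 0 := fun j => h _ (by positivity)
    have hSmono : Monotone S := by
      apply monotone_nat_of_le_succ
      intro j k hk
      simp only [hS, Set.mem_setOf_eq] at hk ⊢
      refine le_trans ?_ hk
      rw [inv_le_inv₀ (by positivity) (by positivity)]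
      push_cast
      linarith
    set G : ℕ → Set ℕ := fun j => Nat.rec (S 0) (fun m _ => S (m + 1) \ S m) j with hG
    have hG0 : G 0 = S 0 := rfl
    have hGsucc : ∀ m, G (m + 1) = S (m + 1) \ S m := fun m => rfl
    have hGsub : ∀ j, G j ⊆ S j := by
      intro j
      cases j with
      | zero => exact le_refl _
      | succ m => rw [hGsucc]; exact Set.diff_subset
    have hcover : ∀ j k, k ∈ S j → ∃ i ≤ j, k ∈ G i := by
      intro j
      induction j with
      | zero => intro k hk; exact ⟨0, le_refl _, hk⟩
      | succ m ih =>
        intro k hk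
        by_cases hkm : k ∈ S m
        · obtain ⟨i, hi, hki⟩ := ih k hkm
          exact ⟨i, hi.trans (Nat.le_succ m), hki⟩
        · exact ⟨m + 1, le_refl _, by rw [hGsucc]; exact ⟨hk, hkm⟩⟩
    have hGdisj : Pairwise (Function.onFun Disjoint G) := by
      have key : ∀ i j, i < j → Disjoint (G i) (G j) := by
        intro i j hij
        obtain ⟨m, rfl⟩ := Nat.exists_eq_add_of_lt hij
        rw [Set.disjoint_left]
        intro k hki hkj
        rw [hGsucc] at hkj
        exact hkj.2 (hSmono (by omega) (hGsub i hki))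
      intro i j hne
      rcases lt_or_gt_of_ne hne with hlt | hgt
      · exact key i j hlt
      · exact (key j i hgt).symm
    have hGdens : ∀ j, AIDensity I A (G j) 0 :=
      fun j => dens_mono hA hI (hGsub j) (hSdens j)
    obtain ⟨H, hHfin, hHdens⟩ := hAP G hGdisj hGdens
    set M : Set ℕ := (⋃ j, H j)ᶜ with hM
    have hMdens : AIDensity I A M 1 := by
      simpa only [sub_zero] using dens_compl hA hI hHdens
    have hMinf : M.Infinite := by
      intro hfin
      have h0 : AIDensity I A M 0 := dens_finite0 hA hI hfin
      exact one_ne_zero (ilim_unique hI hMdens h0)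
    have hMinf' : {k | k ∈ M}.Infinite := hMinf
    refine ⟨Nat.nth (· ∈ M), Nat.nth_strictMono hMinf', ?_, ?_⟩
    · have hrange : Set.range (Nat.nth (· ∈ M)) = M := by
        rw [Nat.range_nth_of_infinite hMinf']; exact Set.setOf_mem_eq
      rw [hrange]; exact hMdens
    · rw [Metric.tendsto_atTop]
      intro ε hε
      obtain ⟨j, hj⟩ := exists_nat_one_div_lt hε
      have hjε : ((j : ℝ) + 1)⁻¹ < ε := by rwa [one_div] at hj
      set F : Set ℕ := ⋃ i ∈ Finset.range (j + 1), symmDiff (G i) (H i) with hF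
      have hFfin : F.Finite := Set.Finite.biUnion (Finset.range (j + 1)).finite_toSet
        (fun i _ => hHfin i)
      obtain ⟨N, hN⟩ := hFfin.bddAbove
      refine ⟨N + 1, fun m hm => ?_⟩
      have hmem : Nat.nth (· ∈ M) m ∈ M := Nat.nth_mem_of_infinite hMinf' m
      have hbig : N < Nat.nth (· ∈ M) m :=
        lt_of_lt_of_le (Nat.lt_of_succ_le hm) (Nat.nth_strictMono hMinf').le_apply
      have hnotS : Nat.nth (· ∈ M) m ∉ S j := by
        intro hkS
        obtain ⟨i, hi, hki⟩ := hcover j _ hkS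
        have hkH : Nat.nth (· ∈ M) m ∉ H i := by
          intro hh
          exact hmem (Set.mem_iUnion.2 ⟨i, hh⟩)
        have hsym : Nat.nth (· ∈ M) m ∈ symmDiff (G i) (H i) :=
          Set.mem_symmDiff.2 (Or.inl ⟨hki, hkH⟩)
        have hkF : Nat.nth (· ∈ M) m ∈ F :=
          Set.mem_biUnion (Finset.mem_range.mpr (Nat.lt_succ_of_le hi)) hsym
        exact absurd (hN hkF) (not_le.2 hbig)
      simp only [hS, Set.mem_setOf_eq, not_le] at hnotS
      calc dist (x (Nat.nth (· ∈ M) m)) L < ((j : ℝ) + 1)⁻¹ := hnotS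
        _ < ε := hjε
  · -- backward direction
    rintro ⟨f, hf, hfdens, hflim⟩
    intro ε hε
    obtain ⟨J, hJ⟩ := (Metric.tendsto_atTop.1 hflim) ε hε
    have hfin : (f '' Set.Iio J).Finite := (Set.finite_Iio J).image f
    have hcdens : AIDensity I A (Set.range f)ᶜ 0 := by
      have := dens_compl hA hI hfdens
      simpa using this
    have hsub : {k : ℕ | ε ≤ dist (x k) L} ⊆ (f '' Set.Iio J) ∪ (Set.range f)ᶜ := by
      intro k hk
      by_cases hkr : k ∈ Set.range f
      · obtain ⟨m, rfl⟩ := hkr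
        left
        refine ⟨m, ?_, rfl⟩
        simp only [Set.mem_Iio]
        by_contra hge
        push_neg at hge
        exact absurd hk.out (not_le.2 (hJ m hge))
      · exact Or.inr hkr
    exact dens_mono hA hI hsub
      (dens_union0 hA hI (dens_finite0 hA hI hfin) hcdens)
end

section
/- Let (X,d) be a metric space, (x_k) a sequence in X, and suppose δ_{A^I} satisfies property AP A^I O. Then (x_k) is A^I-statistically convergent to L ∈ X if and only if there exists a sequence (y_k) in X such that δ_{A^I}({k : x_k ≠ y_k}) = 0 and (y_k) converges to L in the usual sense (paper's Theorem 3.5). -/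
open Filter Topology

lemma aux_tsum_nonneg {A : ℕ → ℕ → ℝ} (hA : RegularMatrix A) (M : Set ℕ) (n : ℕ) :
    0 ≤ ∑' k, M.indicator (A n) k :=
  tsum_nonneg (fun k => Set.indicator_nonneg (fun k _ => hA.nonneg n k) k)

lemma aux_tsum_mono {A : ℕ → ℕ → ℝ} (hA : RegularMatrix A) {M M' : Set ℕ} (h : M ⊆ M') (n : ℕ) :
    ∑' k, M.indicator (A n) k ≤ ∑' k, M'.indicator (A n) k :=
  Summable.tsum_le_tsum (fun k => Set.indicator_le_indicator_of_subset h (fun k => hA.nonneg n k) k)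
    ((hA.summable n).indicator M) ((hA.summable n).indicator M')

lemma density_zero_mono {A : ℕ → ℕ → ℝ} {I : Set (Set ℕ)} (hA : RegularMatrix A)
    (hI : AdmissibleIdeal I) {M M' : Set ℕ} (h : M ⊆ M') (hM' : AIDensity I A M' 0) :
    AIDensity I A M 0 := by
  intro ε hε
  refine hI.subset_mem (hM' ε hε) ?_
  intro n hn
  simp only [Set.mem_setOf_eq, sub_zero, abs_of_nonneg (aux_tsum_nonneg hA _ n)] at hn ⊢
  exact hn.trans (aux_tsum_mono hA h n)

lemma density_zero_union {A : ℕ → ℕ → ℝ} {I : Set (Set ℕ)} (hA : RegularMatrix A)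
    (hI : AdmissibleIdeal I) {M M' : Set ℕ} (hM : AIDensity I A M 0) (hM' : AIDensity I A M' 0) :
    AIDensity I A (M ∪ M') 0 := by
  intro ε hε
  refine hI.subset_mem (hI.union_mem (hM (ε/2) (by linarith)) (hM' (ε/2) (by linarith))) ?_
  intro n hn
  simp only [Set.mem_setOf_eq, sub_zero, Set.mem_union,
    abs_of_nonneg (aux_tsum_nonneg hA _ n)] at hn ⊢
  by_contra hc
  push_neg at hc
  have hle : ∑' k, (M ∪ M').indicator (A n) k
      ≤ (∑' k, M.indicator (A n) k) + ∑' k, M'.indicator (A n) k := by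
    rw [← Summable.tsum_add ((hA.summable n).indicator M) ((hA.summable n).indicator M')]
    refine Summable.tsum_le_tsum (fun k => ?_) ((hA.summable n).indicator _)
      (((hA.summable n).indicator M).add ((hA.summable n).indicator M'))
    by_cases h1 : k ∈ M
    · rw [Set.indicator_of_mem (Set.mem_union_left _ h1), Set.indicator_of_mem h1]
      exact le_add_of_nonneg_right (Set.indicator_nonneg (fun k _ => hA.nonneg n k) k)
    · by_cases h2 : k ∈ M'
      · rw [Set.indicator_of_mem (Set.mem_union_right _ h2), Set.indicator_of_mem h2]
        exact le_add_of_nonneg_left (Set.indicator_nonneg (fun k _ => hA.nonneg n k) k)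
      · rw [Set.indicator_of_notMem (fun h => h.elim h1 h2)]
        exact add_nonneg (Set.indicator_nonneg (fun k _ => hA.nonneg n k) k)
          (Set.indicator_nonneg (fun k _ => hA.nonneg n k) k)
  linarith [hc.1, hc.2]

lemma density_zero_finite {A : ℕ → ℕ → ℝ} {I : Set (Set ℕ)} (hA : RegularMatrix A)
    (hI : AdmissibleIdeal I) {F : Set ℕ} (hF : F.Finite) : AIDensity I A F 0 := by
  have ht : Tendsto (fun n => ∑' k, F.indicator (A n) k) atTop (𝓝 0) := by
    have heq : ∀ n, ∑' k, F.indicator (A n) k = ∑ k ∈ hF.toFinset, A n k := by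
      intro n
      rw [tsum_eq_sum (s := hF.toFinset)
        (fun k hk => Set.indicator_of_notMem (fun h => hk (hF.mem_toFinset.2 h)) _)]
      exact Finset.sum_congr rfl (fun k hk => Set.indicator_of_mem (hF.mem_toFinset.1 hk) _)
    simp_rw [heq]
    simpa using tendsto_finset_sum hF.toFinset (fun k _ => hA.col_lim k)
  intro ε hε
  obtain ⟨N, hN⟩ := Metric.tendsto_atTop.mp ht ε hε
  refine hI.finite_mem ((Set.finite_Iio N).subset ?_)
  intro n hn
  simp only [Set.mem_setOf_eq] at hn
  by_contra hc
  simp only [Set.mem_Iio, not_lt] at hc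
  have := hN n hc
  rw [Real.dist_eq, sub_zero] at this
  rw [sub_zero] at hn
  linarith

theorem stmt_4 {X : Type*} [MetricSpace X] (A : ℕ → ℕ → ℝ) (I : Set (Set ℕ))
    (hA : RegularMatrix A) (hI : AdmissibleIdeal I) (hAP : APAIO I A)
    (x : ℕ → X) (L : X) :
    AIStatConv I A x L ↔
      ∃ y : ℕ → X, AIDensity I A {k : ℕ | x k ≠ y k} 0 ∧
        Tendsto y atTop (𝓝 L) := by
  constructor
  · intro hx
    set E : ℕ → Set ℕ := fun j => {k | 1 / (j + 1 : ℝ) ≤ dist (x k) L} with hE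
    set G : ℕ → Set ℕ := fun j => E j \ ⋃ i < j, E i with hG
    have hGE : ∀ j, G j ⊆ E j := fun j => Set.diff_subset
    have hGd : Pairwise (Function.onFun Disjoint G) := by
      intro i j hij
      rcases lt_or_gt_of_ne hij with h | h
      · refine Set.disjoint_left.2 (fun k hki hkj => ?_)
        exact hkj.2 (Set.mem_biUnion h hki.1)
      · refine Set.disjoint_left.2 (fun k hki hkj => ?_)
        exact hki.2 (Set.mem_biUnion h hkj.1)
    have hEG : ∀ j k, k ∈ E j → ∃ i ≤ j, k ∈ G i := by
      intro j k hk
      have hex : ∃ i, k ∈ E i := ⟨j, hk⟩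
      refine ⟨Nat.find hex, Nat.find_min' hex hk, Nat.find_spec hex, ?_⟩
      intro hmem
      simp only [Set.mem_iUnion] at hmem
      obtain ⟨i, hi, hki⟩ := hmem
      exact Nat.find_min hex hi hki
    have hGz : ∀ j, AIDensity I A (G j) 0 := by
      intro j
      refine density_zero_mono hA hI (hGE j) ?_
      exact hx (1 / (j + 1 : ℝ)) (by positivity)
    obtain ⟨H, hHfin, hHd⟩ := hAP G hGd hGz
    set S : Set ℕ := ⋃ j, H j with hS
    classical
    refine ⟨fun k => if k ∈ S then L else x k, ?_, ?_⟩
    · refine density_zero_mono hA hI (fun k hk => ?_) hHd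
      simp only [Set.mem_setOf_eq] at hk
      by_contra hkS
      rw [if_neg hkS] at hk
      exact hk rfl
    · rw [Metric.tendsto_atTop]
      intro ε hε
      obtain ⟨j, hj⟩ := exists_nat_one_div_lt hε
      have hFfin : (⋃ i ∈ Finset.range (j + 1), symmDiff (G i) (H i)).Finite :=
        Set.Finite.biUnion (Finset.range (j + 1)).finite_toSet (fun i _ => hHfin i)
      obtain ⟨N, hN⟩ : ∃ N, ∀ k ∈ ⋃ i ∈ Finset.range (j + 1), symmDiff (G i) (H i), k < N := by
        obtain ⟨N, hN⟩ := hFfin.bddAbove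
        exact ⟨N + 1, fun k hk => Nat.lt_succ_of_le (hN hk)⟩
      refine ⟨N, fun k hk => ?_⟩
      by_cases hkS : k ∈ S
      · simp [hkS, hε]
      · simp only [hkS, if_false]
        by_contra hc
        push_neg at hc
        have hkE : k ∈ E j := by
          simp only [hE, Set.mem_setOf_eq]
          exact le_trans (le_of_lt hj) hc
        obtain ⟨i, hij, hki⟩ := hEG j k hkE
        have hkH : k ∉ H i := fun h => hkS (Set.mem_iUnion.2 ⟨i, h⟩)
        have : k ∈ symmDiff (G i) (H i) := Or.inl ⟨hki, hkH⟩
        have : k < N := hN k (Set.mem_biUnion (Finset.mem_range.2 (Nat.lt_succ_of_le hij)) this)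
        omega
  · rintro ⟨y, hyd, hy⟩
    intro ε hε
    obtain ⟨N, hN⟩ := Metric.tendsto_atTop.mp hy ε hε
    have hsub : {k : ℕ | ε ≤ dist (x k) L} ⊆ {k : ℕ | x k ≠ y k} ∪ Set.Iio N := by
      intro k hk
      simp only [Set.mem_setOf_eq] at hk
      by_cases h1 : x k = y k
      · right
        simp only [Set.mem_Iio]
        by_contra h2
        push_neg at h2
        have := hN k h2
        rw [← h1] at this
        linarith
      · exact Or.inl h1
    exact density_zero_mono hA hI hsub
      (density_zero_union hA hI hyd (density_zero_finite hA hI (Set.finite_Iio N)))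
end

section
/- Let (X,d) be a metric space and (x_k) a sequence in X. If (x_k) is A^I-statistically convergent to some L ∈ X, then (x_k) is A^I-statistically Cauchy (paper's Theorem 3.7). -/
open Filter Topology

theorem stmt_6 {X : Type*} [MetricSpace X] (A : ℕ → ℕ → ℝ) (I : Set (Set ℕ))
    (hA : RegularMatrix A) (hI : AdmissibleIdeal I) (x : ℕ → X) (L : X)
    (hx : AIStatConv I A x L) : AIStatCauchy I A x := by
  intro γ hγ
  have hε : (0:ℝ) < γ/2 := by positivity
  have hM := hx (γ/2) hε
  by_cases h : ∃ k₀, dist (x k₀) L < γ/2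
  · obtain ⟨k₀, hk₀⟩ := h
    refine ⟨k₀, ?_⟩
    intro δ hδ
    have hmem := hM δ hδ
    refine hI.subset_mem hmem ?_
    intro n hn
    simp only [Set.mem_setOf_eq, sub_zero] at hn ⊢
    have hsub : {k : ℕ | γ ≤ dist (x k) (x k₀)} ⊆ {k : ℕ | γ/2 ≤ dist (x k) L} := by
      intro k hk
      simp only [Set.mem_setOf_eq] at hk ⊢
      have htri := dist_triangle (x k) L (x k₀)
      have h2 : dist L (x k₀) < γ/2 := by rwa [dist_comm]
      linarith
    have hle : (∑' k, ({k : ℕ | γ ≤ dist (x k) (x k₀)}).indicator (A n) k)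
        ≤ ∑' k, ({k : ℕ | γ/2 ≤ dist (x k) L}).indicator (A n) k := by
      refine Summable.tsum_le_tsum (fun k => ?_) ((hA.summable n).indicator _)
        ((hA.summable n).indicator _)
      exact Set.indicator_le_indicator_of_subset hsub (fun k => hA.nonneg n k) k
    have h0 : (0:ℝ) ≤ ∑' k, ({k : ℕ | γ ≤ dist (x k) (x k₀)}).indicator (A n) k :=
      tsum_nonneg (fun k => Set.indicator_nonneg (fun i _ => hA.nonneg n i) k)
    have h0' : (0:ℝ) ≤ ∑' k, ({k : ℕ | γ/2 ≤ dist (x k) L}).indicator (A n) k :=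
      tsum_nonneg (fun k => Set.indicator_nonneg (fun i _ => hA.nonneg n i) k)
    rw [abs_of_nonneg h0] at hn
    rw [abs_of_nonneg h0']
    linarith
  · exfalso
    push_neg at h
    have hall : {k : ℕ | γ/2 ≤ dist (x k) L} = Set.univ := by
      ext k; simpa using h k
    have hS : {n : ℕ | (1:ℝ)/2 ≤ |(∑' k, Set.univ.indicator (A n) k) - 0|} ∈ I := by
      have := hM (1/2) (by norm_num)
      rwa [hall] at this
    have hcof : {n : ℕ | ¬ ((1:ℝ)/2 ≤ |(∑' k, Set.univ.indicator (A n) k) - 0|)}.Finite := by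
      have hsimp : ∀ n, (∑' k, Set.univ.indicator (A n) k) = ∑' k, A n k := by
        intro n; simp
      have hev : ∀ᶠ n in atTop, (1:ℝ)/2 ≤ |(∑' k, Set.univ.indicator (A n) k) - 0| := by
        have := hA.row_sum
        rw [Metric.tendsto_atTop] at this
        obtain ⟨N, hN⟩ := this (1/2) (by norm_num)
        filter_upwards [Filter.eventually_ge_atTop N] with n hn
        have := hN n hn
        rw [Real.dist_eq] at this
        rw [hsimp n, sub_zero]
        rw [abs_lt] at this
        rw [le_abs]
        left; linarith
      rw [Filter.eventually_atTop] at hev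
      obtain ⟨N, hN⟩ := hev
      refine Set.Finite.subset (Set.finite_Iio N) ?_
      intro n hn
      simp only [Set.mem_setOf_eq] at hn
      by_contra hc
      exact hn (hN n (not_lt.mp (by simpa [Set.mem_Iio] using hc)))
    have : (Set.univ : Set ℕ) ∈ I := by
      have := hI.union_mem hS (hI.finite_mem hcof)
      refine hI.subset_mem this ?_
      intro n _
      by_cases hh : (1:ℝ)/2 ≤ |(∑' k, Set.univ.indicator (A n) k) - 0|
      · exact Or.inl hh
      · exact Or.inr hh
    exact hI.univ_not_mem this
end

section
/- Let (X,d) be a metric space and (x_k) a sequence in X. Then (x_k) is A^I-statistically Cauchy if and only if for every γ > 0 there exists a set M ⊆ ℕ with δ_{A^I}(M) = 0 such that d(x_m, x_n) < γ for all m, n ∉ M (paper's Lemma 3.1, equivalence of statements (1) and (2)). -/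
open Filter Topology

lemma aidensity_mono {A : ℕ → ℕ → ℝ} {I : Set (Set ℕ)}
    (hA : RegularMatrix A) (hI : AdmissibleIdeal I) {M N : Set ℕ} (hNM : N ⊆ M)
    (hM : AIDensity I A M 0) : AIDensity I A N 0 := by
  intro ε hε
  refine hI.subset_mem (hM ε hε) ?_
  intro n hn
  simp only [Set.mem_setOf_eq, sub_zero] at hn ⊢
  have hsum : ∀ S : Set ℕ, Summable (S.indicator (A n)) :=
    fun S => (hA.summable n).indicator S
  have h1 : (0:ℝ) ≤ ∑' k, N.indicator (A n) k :=
    tsum_nonneg fun k => Set.indicator_nonneg (fun j _ => hA.nonneg n j) k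
  have h2 : (∑' k, N.indicator (A n) k) ≤ ∑' k, M.indicator (A n) k := by
    refine Summable.tsum_le_tsum (fun k => ?_) (hsum N) (hsum M)
    exact Set.indicator_le_indicator_of_subset hNM (fun j => hA.nonneg n j) k
  have h3 : (0:ℝ) ≤ ∑' k, M.indicator (A n) k := le_trans h1 h2
  rw [abs_of_nonneg h1] at hn
  rw [abs_of_nonneg h3]
  exact le_trans hn h2

theorem stmt_8 {X : Type*} [MetricSpace X] (A : ℕ → ℕ → ℝ) (I : Set (Set ℕ))
    (hA : RegularMatrix A) (hI : AdmissibleIdeal I) (x : ℕ → X) :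
    AIStatCauchy I A x ↔
      ∀ γ > 0, ∃ M : Set ℕ, AIDensity I A M 0 ∧
        ∀ m ∉ M, ∀ n ∉ M, dist (x m) (x n) < γ := by
  constructor
  · intro h γ hγ
    obtain ⟨k₀, hk₀⟩ := h (γ/2) (by linarith)
    refine ⟨{k : ℕ | γ/2 ≤ dist (x k) (x k₀)}, hk₀, ?_⟩
    intro m hm n hn
    simp only [Set.mem_setOf_eq, not_le] at hm hn
    calc dist (x m) (x n) ≤ dist (x m) (x k₀) + dist (x k₀) (x n) := dist_triangle _ _ _
      _ < γ/2 + γ/2 := by rw [dist_comm (x k₀)]; linarith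
      _ = γ := by ring
  · intro h γ hγ
    obtain ⟨M, hM, hMd⟩ := h γ hγ
    by_cases hc : ∃ k₀, k₀ ∉ M
    · obtain ⟨k₀, hk₀⟩ := hc
      refine ⟨k₀, aidensity_mono hA hI ?_ hM⟩
      intro k hk
      simp only [Set.mem_setOf_eq] at hk
      by_contra hkM
      exact absurd hk (not_le.2 (hMd k hkM k₀ hk₀))
    · refine ⟨0, aidensity_mono hA hI (fun k _ => ?_) hM⟩
      push_neg at hc
      exact hc k
end

section
/- Let (X,d) be a metric space and (x_k) a sequence in X. For γ > 0 and j ∈ ℕ set D_j(γ) = {k ∈ ℕ : d(x_k, x_j) ≥ γ}. Then (x_k) is A^I-statistically Cauchy if and only if for every γ > 0 the set {j ∈ ℕ : the A^I-density of D_j(γ) is not equal to 0 (it is nonzero or does not exist)} has A^I-density zero (paper's Lemma 3.1, equivalence of statements (1) and (3)). -/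
open Filter Topology

lemma density_mono {A : ℕ → ℕ → ℝ} {I : Set (Set ℕ)}
    (hA : RegularMatrix A) (hI : AdmissibleIdeal I)
    {M N : Set ℕ} (h : M ⊆ N) (hN : AIDensity I A N 0) : AIDensity I A M 0 := by
  intro ε hε
  refine hI.subset_mem (hN ε hε) ?_
  intro n hn
  simp only [Set.mem_setOf_eq, sub_zero] at *
  have hsum : Summable (A n) := hA.summable n
  have hM : Summable (M.indicator (A n)) := hsum.indicator M
  have hNs : Summable (N.indicator (A n)) := hsum.indicator N
  have h1 : (∑' k, M.indicator (A n) k) ≤ ∑' k, N.indicator (A n) k :=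
    Summable.tsum_le_tsum (fun k =>
      Set.indicator_le_indicator_apply_of_subset h (hA.nonneg n k)) hM hNs
  have h0M : 0 ≤ ∑' k, M.indicator (A n) k :=
    tsum_nonneg fun k => Set.indicator_nonneg (fun k _ => hA.nonneg n k) k
  have h0N : 0 ≤ ∑' k, N.indicator (A n) k := h0M.trans h1
  rw [abs_of_nonneg h0M] at hn
  rw [abs_of_nonneg h0N]
  exact hn.trans h1

lemma density_univ_ne_zero {A : ℕ → ℕ → ℝ} {I : Set (Set ℕ)}
    (hA : RegularMatrix A) (hI : AdmissibleIdeal I) :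
    ¬ AIDensity I A Set.univ 0 := by
  intro h
  have h2 := h (1/2) (by norm_num)
  simp only [Set.indicator_univ, sub_zero] at h2
  have := hA.row_sum
  rw [Metric.tendsto_atTop] at this
  obtain ⟨N, hN⟩ := this (1/2) (by norm_num)
  have : Set.univ ⊆ {n : ℕ | (1:ℝ)/2 ≤ |∑' k, A n k|} ∪ {n : ℕ | n < N} := by
    intro n _
    by_cases hn : n < N
    · exact Or.inr hn
    · left
      have := hN n (le_of_not_gt hn)
      rw [Real.dist_eq] at this
      have : (1:ℝ)/2 ≤ ∑' k, A n k := by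
        have := abs_lt.mp this
        linarith [this.1]
      calc (1:ℝ)/2 ≤ ∑' k, A n k := this
        _ ≤ |∑' k, A n k| := le_abs_self _
  exact hI.univ_not_mem (hI.subset_mem
    (hI.union_mem h2 (hI.finite_mem (Set.finite_Iio N))) this)

theorem stmt_9 {X : Type*} [MetricSpace X] (A : ℕ → ℕ → ℝ) (I : Set (Set ℕ))
    (hA : RegularMatrix A) (hI : AdmissibleIdeal I) (x : ℕ → X) :
    AIStatCauchy I A x ↔
      ∀ γ > 0, AIDensity I A
        {j : ℕ | ¬ AIDensity I A {k : ℕ | γ ≤ dist (x k) (x j)} 0} 0 := by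
  constructor
  · intro hC γ hγ
    obtain ⟨k₀, hk₀⟩ := hC (γ/2) (by linarith)
    refine density_mono hA hI (N := {k : ℕ | γ/2 ≤ dist (x k) (x k₀)}) ?_ hk₀
    intro j hj
    simp only [Set.mem_setOf_eq] at hj ⊢
    by_contra hlt
    push_neg at hlt
    apply hj
    refine density_mono hA hI (N := {k : ℕ | γ/2 ≤ dist (x k) (x k₀)}) ?_ hk₀
    intro k hk
    simp only [Set.mem_setOf_eq] at hk ⊢
    have htri := dist_triangle (x k) (x k₀) (x j)
    have hcomm : dist (x k₀) (x j) = dist (x j) (x k₀) := dist_comm _ _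
    linarith
  · intro h γ hγ
    have hS := h γ hγ
    have : ({j : ℕ | ¬ AIDensity I A {k : ℕ | γ ≤ dist (x k) (x j)} 0} : Set ℕ) ≠ Set.univ := by
      intro heq
      rw [heq] at hS
      exact density_univ_ne_zero hA hI hS
    obtain ⟨j, hj⟩ := Set.ne_univ_iff_exists_notMem _ |>.mp this
    simp only [Set.mem_setOf_eq, not_not] at hj
    exact ⟨j, hj⟩
end

section
/- Let (X,d) be a metric space and (x_k) a sequence in X. If (x_k) is A^I-statistically Cauchy, then for every t > 0 there exists a set P_t ⊆ ℕ with δ_{A^I}(P_t) = 0 such that d(x_m, x_j) < t for all m, j ∉ P_t; equivalently, there exists Q_t ⊆ ℕ with δ_{A^I}(Q_t) = 1 such that d(x_m, x_j) < t for all m, j ∈ Q_t (paper's Theorem 3.8 and its Corollary). -/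
open Filter Topology

theorem stmt_10 {X : Type*} [MetricSpace X] (A : ℕ → ℕ → ℝ) (I : Set (Set ℕ))
    (hA : RegularMatrix A) (hI : AdmissibleIdeal I) (x : ℕ → X)
    (hx : AIStatCauchy I A x) :
    ∀ t > 0, (∃ P : Set ℕ, AIDensity I A P 0 ∧
        ∀ m ∉ P, ∀ j ∉ P, dist (x m) (x j) < t) ∧
      (∃ Q : Set ℕ, AIDensity I A Q 1 ∧
        ∀ m ∈ Q, ∀ j ∈ Q, dist (x m) (x j) < t) := by
  intro t ht
  obtain ⟨k₀, hP⟩ := hx (t / 2) (by positivity)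
  set P : Set ℕ := {k : ℕ | t / 2 ≤ dist (x k) (x k₀)} with hPdef
  have hdist : ∀ m ∉ P, ∀ j ∉ P, dist (x m) (x j) < t := by
    intro m hm j hj
    simp only [hPdef, Set.mem_setOf_eq, not_le] at hm hj
    calc dist (x m) (x j) ≤ dist (x m) (x k₀) + dist (x j) (x k₀) :=
          dist_triangle_right _ _ _
      _ < t / 2 + t / 2 := add_lt_add hm hj
      _ = t := by ring
  have hQ : AIDensity I A Pᶜ 1 := by
    intro ε hε
    have hsub : {n : ℕ | ε ≤ |(∑' k, Pᶜ.indicator (A n) k) - 1|} ⊆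
        {n : ℕ | ε / 2 ≤ |(∑' k, A n k) - 1|} ∪
        {n : ℕ | ε / 2 ≤ |(∑' k, P.indicator (A n) k) - 0|} := by
      intro n hn
      simp only [Set.mem_setOf_eq] at hn
      by_contra hcon
      simp only [Set.mem_union, Set.mem_setOf_eq, not_or, not_le] at hcon
      obtain ⟨h1, h2⟩ := hcon
      have hsum : (∑' k, P.indicator (A n) k) + (∑' k, Pᶜ.indicator (A n) k)
          = ∑' k, A n k := by
        rw [← Summable.tsum_add ((hA.summable n).indicator P) ((hA.summable n).indicator Pᶜ)]
        congr 1
        ext k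
        simp [Set.indicator_apply]
        by_cases hk : k ∈ P <;> simp [hk]
      have : |(∑' k, Pᶜ.indicator (A n) k) - 1| ≤
          |(∑' k, A n k) - 1| + |(∑' k, P.indicator (A n) k) - 0| := by
        have : (∑' k, Pᶜ.indicator (A n) k) - 1 =
            ((∑' k, A n k) - 1) - ((∑' k, P.indicator (A n) k) - 0) := by
          rw [← hsum]; ring
        rw [this]
        exact abs_sub _ _
      linarith
    apply hI.subset_mem _ hsub
    apply hI.union_mem
    · apply hI.finite_mem
      have := hA.row_sum
      rw [Metric.tendsto_atTop] at this
      obtain ⟨N, hN⟩ := this (ε / 2) (by positivity)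
      apply Set.Finite.subset (Set.finite_Iio N)
      intro n hn
      simp only [Set.mem_setOf_eq] at hn
      by_contra hcon
      simp only [Set.mem_Iio, not_lt] at hcon
      have := hN n hcon
      rw [Real.dist_eq] at this
      linarith
    · exact hP (ε / 2) (by positivity)
  refine ⟨⟨P, hP, hdist⟩, ⟨Pᶜ, hQ, ?_⟩⟩
  intro m hm j hj
  exact hdist m hm j hj
end

section
/- Let (X,d) be a metric space and (x_k), (y_k) two A^I-statistically Cauchy sequences in X. Then the real sequence (d(x_k, y_k)) is A^I-statistically Cauchy in ℝ (with the usual metric), i.e., for every γ > 0 there exists k₀ ∈ ℕ with δ_{A^I}({k : |d(x_k,y_k) − d(x_{k₀},y_{k₀})| ≥ γ}) = 0 (paper's Theorem 3.9). -/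
open Filter Topology

lemma aux_union {A : ℕ → ℕ → ℝ} {I : Set (Set ℕ)} (hA : RegularMatrix A)
    (hI : AdmissibleIdeal I) {S T U : Set ℕ} (hU : U ⊆ S ∪ T)
    (hS : AIDensity I A S 0) (hT : AIDensity I A T 0) : AIDensity I A U 0 := by
  intro ε hε
  have key : ∀ n, ∑' k, U.indicator (A n) k ≤
      (∑' k, S.indicator (A n) k) + ∑' k, T.indicator (A n) k := by
    intro n
    rw [← Summable.tsum_add ((hA.summable n).indicator S) ((hA.summable n).indicator T)]
    refine Summable.tsum_le_tsum (fun k => ?_) ((hA.summable n).indicator U)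
      (((hA.summable n).indicator S).add ((hA.summable n).indicator T))
    by_cases hk : k ∈ U
    · rw [Set.indicator_of_mem hk]
      rcases hU hk with h | h
      · calc A n k = S.indicator (A n) k := (Set.indicator_of_mem h _).symm
          _ ≤ _ := le_add_of_nonneg_right (Set.indicator_nonneg (fun a _ => hA.nonneg n a) k)
      · calc A n k = T.indicator (A n) k := (Set.indicator_of_mem h _).symm
          _ ≤ _ := le_add_of_nonneg_left (Set.indicator_nonneg (fun a _ => hA.nonneg n a) k)
    · rw [Set.indicator_of_notMem hk]
      exact add_nonneg (Set.indicator_nonneg (fun a _ => hA.nonneg n a) k)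
        (Set.indicator_nonneg (fun a _ => hA.nonneg n a) k)
  have nn : ∀ (M : Set ℕ) n, 0 ≤ ∑' k, M.indicator (A n) k := fun M n =>
    tsum_nonneg (fun k => Set.indicator_nonneg (fun a _ => hA.nonneg n a) k)
  refine hI.subset_mem (hI.union_mem (hS (ε/2) (by linarith)) (hT (ε/2) (by linarith))) ?_
  intro n hn
  simp only [Set.mem_setOf_eq, sub_zero, abs_of_nonneg (nn _ n)] at hn ⊢
  by_contra hcon
  simp only [Set.mem_union, Set.mem_setOf_eq, not_or, not_le] at hcon
  have := key n
  have h1 := nn S n; have h2 := nn T n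
  have c1 := hcon.1
  have c2 := hcon.2
  simp only [abs_of_nonneg (nn S n), abs_of_nonneg (nn T n)] at c1 c2
  linarith

lemma aux_not_univ {A : ℕ → ℕ → ℝ} {I : Set (Set ℕ)} (hA : RegularMatrix A)
    (hI : AdmissibleIdeal I) {S : Set ℕ} (hS : AIDensity I A S 0) : S ≠ Set.univ := by
  intro heq
  have h0 := hS (1/2) (by norm_num)
  have h1 : {n : ℕ | (1:ℝ)/2 ≤ |(∑' k, A n k) - 1|} ∈ I := by
    refine hI.finite_mem ?_
    have := (hA.row_sum.eventually (Metric.ball_mem_nhds (1:ℝ) (by norm_num : (0:ℝ) < 1/2)))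
    rw [eventually_atTop] at this
    obtain ⟨N, hN⟩ := this
    refine (Set.finite_Iio N).subset fun n hn => ?_
    simp only [Set.mem_setOf_eq] at hn
    by_contra h
    simp only [Set.mem_Iio, not_lt] at h
    have := hN n h
    rw [Real.dist_eq] at this
    linarith
  have : Set.univ ∈ I := by
    refine hI.subset_mem (hI.union_mem h0 h1) fun n _ => ?_
    have hsum : ∑' k, S.indicator (A n) k = ∑' k, A n k := by
      rw [heq, Set.indicator_univ]
    by_contra h
    simp only [Set.mem_union, Set.mem_setOf_eq, not_or, not_le, hsum, sub_zero] at h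
    obtain ⟨a, b⟩ := h
    rcases abs_lt.mp a with ⟨a1, a2⟩
    rcases abs_lt.mp b with ⟨b1, b2⟩
    linarith
  exact hI.univ_not_mem this


theorem stmt_11 {X : Type*} [MetricSpace X] (A : ℕ → ℕ → ℝ) (I : Set (Set ℕ))
    (hA : RegularMatrix A) (hI : AdmissibleIdeal I) (x y : ℕ → X)
    (hx : AIStatCauchy I A x) (hy : AIStatCauchy I A y) :
    AIStatCauchy I A (fun k => dist (x k) (y k)) := by
  intro γ hγ
  obtain ⟨k₁, h₁⟩ := hx (γ/4) (by linarith)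
  obtain ⟨k₂, h₂⟩ := hy (γ/4) (by linarith)
  set S : Set ℕ := {k : ℕ | γ/4 ≤ dist (x k) (x k₁)} with hSdef
  set T : Set ℕ := {k : ℕ | γ/4 ≤ dist (y k) (y k₂)} with hTdef
  have hne : S ∪ T ≠ Set.univ := aux_not_univ hA hI (aux_union hA hI subset_rfl h₁ h₂)
  have : ∃ k₀, k₀ ∉ S ∪ T := by
    by_contra h
    push_neg at h
    exact hne (Set.eq_univ_of_forall h)
  obtain ⟨k₀, hk₀⟩ := this
  simp only [Set.mem_union, not_or] at hk₀
  refine ⟨k₀, aux_union hA hI (fun k hk => ?_) h₁ h₂⟩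
  simp only [Set.mem_setOf_eq] at hk
  by_contra hc
  simp only [Set.mem_union, hSdef, hTdef, Set.mem_setOf_eq, not_or, not_le] at hc
  have t1 : dist (x k) (x k₀) ≤ dist (x k) (x k₁) + dist (x k₀) (x k₁) := dist_triangle_right _ _ _
  have t2 : dist (y k) (y k₀) ≤ dist (y k) (y k₂) + dist (y k₀) (y k₂) := dist_triangle_right _ _ _
  have t3 : dist (dist (x k) (y k)) (dist (x k₀) (y k₀)) ≤
      dist (x k) (x k₀) + dist (y k) (y k₀) := dist_dist_dist_le _ _ _ _
  have hS0 : dist (x k₀) (x k₁) < γ/4 := by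
    have := hk₀.1; simp only [hSdef, Set.mem_setOf_eq, not_le] at this; exact this
  have hT0 : dist (y k₀) (y k₂) < γ/4 := by
    have := hk₀.2; simp only [hTdef, Set.mem_setOf_eq, not_le] at this; exact this
  linarith [hc.1, hc.2]
end

section
/- Let (X,d) be a metric space and (x_k), (y_k) sequences in X with δ_{A^I}({k ∈ ℕ : x_k ≠ y_k}) = 0. Then the sets of A^I-statistical cluster points coincide: Γ_x = Γ_y (paper's Theorem 4.3, cluster point part). -/
open Filter Topology

lemma density_zero_of_subset_union {A : ℕ → ℕ → ℝ} {I : Set (Set ℕ)}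
    (hA : RegularMatrix A) (hI : AdmissibleIdeal I) {M N₁ N₂ : Set ℕ}
    (hsub : M ⊆ N₁ ∪ N₂) (h1 : AIDensity I A N₁ 0) (h2 : AIDensity I A N₂ 0) :
    AIDensity I A M 0 := by
  intro ε hε
  have key : {n : ℕ | ε ≤ |(∑' k, M.indicator (A n) k) - 0|} ⊆
      {n : ℕ | ε/2 ≤ |(∑' k, N₁.indicator (A n) k) - 0|} ∪
      {n : ℕ | ε/2 ≤ |(∑' k, N₂.indicator (A n) k) - 0|} := by
    intro n hn
    simp only [Set.mem_setOf_eq, sub_zero] at hn ⊢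
    have hs1 : Summable (N₁.indicator (A n)) := (hA.summable n).indicator N₁
    have hs2 : Summable (N₂.indicator (A n)) := (hA.summable n).indicator N₂
    have hsM : Summable (M.indicator (A n)) := (hA.summable n).indicator M
    have hnn : ∀ (S : Set ℕ) k, 0 ≤ S.indicator (A n) k := fun S k =>
      Set.indicator_nonneg (fun k _ => hA.nonneg n k) k
    have hle : ∀ k, M.indicator (A n) k ≤ N₁.indicator (A n) k + N₂.indicator (A n) k := by
      intro k
      by_cases hk : k ∈ M
      · rcases hsub hk with h | h
        · rw [Set.indicator_of_mem hk, Set.indicator_of_mem h]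
          exact le_add_of_nonneg_right (hnn N₂ k)
        · rw [Set.indicator_of_mem hk, Set.indicator_of_mem h]
          exact le_add_of_nonneg_left (hnn N₁ k)
      · rw [Set.indicator_of_notMem hk]
        exact add_nonneg (hnn N₁ k) (hnn N₂ k)
    have hsum : (∑' k, M.indicator (A n) k) ≤
        (∑' k, N₁.indicator (A n) k) + (∑' k, N₂.indicator (A n) k) := by
      rw [← Summable.tsum_add hs1 hs2]
      exact Summable.tsum_le_tsum hle hsM (hs1.add hs2)
    have hM' : ε ≤ ∑' k, M.indicator (A n) k :=
      le_trans hn (le_of_eq (abs_of_nonneg (tsum_nonneg (hnn M))))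
    have h1nn : 0 ≤ ∑' k, N₁.indicator (A n) k := tsum_nonneg (hnn N₁)
    have h2nn : 0 ≤ ∑' k, N₂.indicator (A n) k := tsum_nonneg (hnn N₂)
    by_cases hc : ε/2 ≤ ∑' k, N₁.indicator (A n) k
    · exact Or.inl (by simp only [Set.mem_setOf_eq]; rwa [abs_of_nonneg h1nn])
    · refine Or.inr (by simp only [Set.mem_setOf_eq]; rw [abs_of_nonneg h2nn]; linarith)
  exact hI.subset_mem (hI.union_mem (h1 (ε/2) (by linarith)) (h2 (ε/2) (by linarith))) key

theorem stmt_14 {X : Type*} [MetricSpace X] (A : ℕ → ℕ → ℝ) (I : Set (Set ℕ))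
    (hA : RegularMatrix A) (hI : AdmissibleIdeal I) (x y : ℕ → X)
    (hxy : AIDensity I A {k : ℕ | x k ≠ y k} 0) :
    AIStatClusterPts I A x = AIStatClusterPts I A y := by
  have main : ∀ u v : ℕ → X, AIDensity I A {k : ℕ | u k ≠ v k} 0 →
      AIStatClusterPts I A u ⊆ AIStatClusterPts I A v := by
    intro u v huv ν hν ε hε hdv
    refine hν ε hε (density_zero_of_subset_union hA hI ?_ hdv huv)
    intro k hk
    by_cases h : u k = v k
    · exact Or.inl (by simpa [h] using hk)
    · exact Or.inr h
  have hyx : AIDensity I A {k : ℕ | y k ≠ x k} 0 := by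
    convert hxy using 2
    ext k; simp [ne_comm]
  exact Set.Subset.antisymm (main x y hxy) (main y x hyx)
end

section
/- Let (X,d) be a metric space and (x_k), (y_k) sequences in X with δ_{A^I}({k ∈ ℕ : x_k ≠ y_k}) = 0. Then the sets of A^I-statistical limit points coincide: Λ_x = Λ_y (paper's Theorem 4.3, limit point part). -/
open Filter Topology

lemma dens_zero_of_subset_union {A : ℕ → ℕ → ℝ} {I : Set (Set ℕ)}
    (hA : RegularMatrix A) (hI : AdmissibleIdeal I) {M M' E : Set ℕ}
    (hsub : M ⊆ M' ∪ E) (h1 : AIDensity I A M' 0) (h2 : AIDensity I A E 0) :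
    AIDensity I A M 0 := by
  intro ε hε
  have hεhalf : (0:ℝ) < ε / 2 := by linarith
  have hmem := hI.union_mem (h1 (ε/2) hεhalf) (h2 (ε/2) hεhalf)
  refine hI.subset_mem hmem ?_
  intro n hn
  simp only [Set.mem_setOf_eq, sub_zero] at hn ⊢
  by_contra hcon
  simp only [Set.mem_union, Set.mem_setOf_eq, sub_zero, not_or, not_le] at hcon
  obtain ⟨hu, hv⟩ := hcon
  have hsum : ∀ S : Set ℕ, Summable (S.indicator (A n)) :=
    fun S => (hA.summable n).indicator S
  have hnn : ∀ S : Set ℕ, (0:ℝ) ≤ ∑' k, S.indicator (A n) k := by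
    intro S
    exact tsum_nonneg (fun k => Set.indicator_nonneg (fun k _ => hA.nonneg n k) k)
  rw [abs_of_nonneg (hnn M')] at hu
  rw [abs_of_nonneg (hnn E)] at hv
  have hpt : ∀ k, M.indicator (A n) k ≤ M'.indicator (A n) k + E.indicator (A n) k := by
    intro k
    by_cases hk : k ∈ M
    · rcases hsub hk with h | h
      · rw [Set.indicator_of_mem hk, Set.indicator_of_mem h]
        have := Set.indicator_nonneg (fun k _ => hA.nonneg n k) (s := E) k
        linarith
      · rw [Set.indicator_of_mem hk, Set.indicator_of_mem (s := E) h]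
        have := Set.indicator_nonneg (fun k _ => hA.nonneg n k) (s := M') k
        linarith
    · rw [Set.indicator_of_notMem hk]
      have h1 := Set.indicator_nonneg (fun k _ => hA.nonneg n k) (s := M') k
      have h2 := Set.indicator_nonneg (fun k _ => hA.nonneg n k) (s := E) k
      linarith
  have hle : (∑' k, M.indicator (A n) k) ≤
      (∑' k, M'.indicator (A n) k) + (∑' k, E.indicator (A n) k) := by
    calc (∑' k, M.indicator (A n) k)
        ≤ ∑' k, (M'.indicator (A n) k + E.indicator (A n) k) :=
          Summable.tsum_le_tsum hpt (hsum M) ((hsum M').add (hsum E))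
      _ = _ := Summable.tsum_add (hsum M') (hsum E)
  rw [abs_of_nonneg (hnn M)] at hn
  linarith

lemma dens_zero_of_finite {A : ℕ → ℕ → ℝ} {I : Set (Set ℕ)}
    (hA : RegularMatrix A) (hI : AdmissibleIdeal I) {M : Set ℕ}
    (hM : M.Finite) : AIDensity I A M 0 := by
  have htend : Tendsto (fun n => ∑' k, M.indicator (A n) k) atTop (𝓝 0) := by
    have heq : ∀ n, (∑' k, M.indicator (A n) k) = ∑ k ∈ hM.toFinset, A n k := by
      intro n
      rw [tsum_eq_sum (s := hM.toFinset)]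
      · exact Finset.sum_congr rfl (fun k hk =>
          Set.indicator_of_mem (hM.mem_toFinset.mp hk) _)
      · intro k hk
        exact Set.indicator_of_notMem (fun h => hk (hM.mem_toFinset.mpr h)) _
    simp only [heq]
    have : Tendsto (fun n => ∑ k ∈ hM.toFinset, A n k) atTop
        (𝓝 (∑ k ∈ hM.toFinset, (0:ℝ))) :=
      tendsto_finset_sum _ (fun k _ => hA.col_lim k)
    simpa using this
  intro ε hε
  obtain ⟨N, hN⟩ := Metric.tendsto_atTop.mp htend ε hε
  have hfin : {n : ℕ | ε ≤ |(∑' k, M.indicator (A n) k) - 0|}.Finite := by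
    apply Set.Finite.subset (Set.finite_Iio N)
    intro n hn
    simp only [Set.mem_setOf_eq] at hn
    by_contra h
    simp only [Set.mem_Iio, not_lt] at h
    have := hN n h
    rw [Real.dist_eq] at this
    simp only [sub_zero] at this hn
    linarith
  exact hI.finite_mem hfin

lemma aistat_limit_subset {X : Type*} [MetricSpace X] {A : ℕ → ℕ → ℝ} {I : Set (Set ℕ)}
    (hA : RegularMatrix A) (hI : AdmissibleIdeal I) {x y : ℕ → X}
    (hxy : AIDensity I A {k : ℕ | x k ≠ y k} 0) :
    AIStatLimitPts I A x ⊆ AIStatLimitPts I A y := by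
  intro ζ hζ
  obtain ⟨f, hf, hfd, hconv⟩ := hζ
  set E : Set ℕ := {k : ℕ | x k ≠ y k} with hE
  set M' : Set ℕ := Set.range f ∩ {k | x k = y k} with hM'
  have hsub : Set.range f ⊆ M' ∪ E := by
    intro k hk
    by_cases h : x k = y k
    · exact Or.inl ⟨hk, h⟩
    · exact Or.inr h
  have hM'nd : ¬ AIDensity I A M' 0 := by
    intro h
    exact hfd (dens_zero_of_subset_union hA hI hsub h hxy)
  have hInf : M'.Infinite := by
    intro hfin
    exact hM'nd (dens_zero_of_finite hA hI hfin)
  set p : ℕ → Prop := fun k => k ∈ M' with hp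
  have hInf' : (setOf p).Infinite := hInf
  set g : ℕ → ℕ := Nat.nth p with hg
  have hgmono : StrictMono g := Nat.nth_strictMono hInf'
  have hgrange : Set.range g = M' := Nat.range_nth_of_infinite hInf'
  have hgmem : ∀ j, g j ∈ M' := fun j => hgrange ▸ Set.mem_range_self j
  -- each g j lies in range f
  have hgf : ∀ j, ∃ m, f m = g j := fun j => (hgmem j).1
  choose m hm using hgf
  have hmmono : StrictMono m := by
    intro i j hij
    have : f (m i) < f (m j) := by rw [hm i, hm j]; exact hgmono hij
    exact hf.lt_iff_lt.mp this
  have hxg : Tendsto (fun j => x (g j)) atTop (𝓝 ζ) := by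
    have : (fun j => x (g j)) = fun j => x (f (m j)) := by
      funext j; rw [hm j]
    rw [this]
    exact hconv.comp hmmono.tendsto_atTop
  refine ⟨g, hgmono, ?_, ?_⟩
  · rw [hgrange]; exact hM'nd
  · have : (fun j => y (g j)) = fun j => x (g j) := by
      funext j
      exact ((hgmem j).2).symm
    rw [this]
    exact hxg

theorem stmt_15 {X : Type*} [MetricSpace X] (A : ℕ → ℕ → ℝ) (I : Set (Set ℕ))
    (hA : RegularMatrix A) (hI : AdmissibleIdeal I) (x y : ℕ → X)
    (hxy : AIDensity I A {k : ℕ | x k ≠ y k} 0) :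
    AIStatLimitPts I A x = AIStatLimitPts I A y := by
  have hxy' : AIDensity I A {k : ℕ | y k ≠ x k} 0 := by
    have : {k : ℕ | y k ≠ x k} = {k : ℕ | x k ≠ y k} := by
      ext k; simp [ne_comm]
    rw [this]; exact hxy
  exact Set.Subset.antisymm (aistat_limit_subset hA hI hxy)
    (aistat_limit_subset hA hI hxy')
end

section
/- Let (X,d) be a metric space, (x_k) a sequence in X, and C a compact subset of X such that C ∩ Γ_x = ∅, where Γ_x is the set of A^I-statistical cluster points of (x_k). Then δ_{A^I}({k ∈ ℕ : x_k ∈ C}) = 0 (paper's Theorem 4.5). -/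
open Filter Topology

/-!
A point of `C` is not an `A^I`-statistical cluster point, so some ball around it contains
the terms of `x` only along an index set of `A^I`-density zero. Compactness covers `C` by
finitely many such balls. For a nonnegative matrix with summable rows the sets of
`A^I`-density zero are closed under subsets and finite unions, and `{k | x k ∈ C}` lies in
the union of the finitely many index sets.
-/

section IndicatorSums

variable {α : Type*} {a : α → ℝ}

lemma tsum_indicator_nonneg (ha : 0 ≤ a) (M : Set α) : 0 ≤ ∑' k, M.indicator a k :=
  tsum_nonneg (Set.indicator_nonneg fun k _ => ha k)

lemma tsum_indicator_mono (ha : 0 ≤ a) (hs : Summable a) {M N : Set α} (h : M ⊆ N) :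
    ∑' k, M.indicator a k ≤ ∑' k, N.indicator a k :=
  (hs.indicator M).tsum_le_tsum (Set.indicator_le_indicator_of_subset h ha) (hs.indicator N)

lemma tsum_indicator_union_le (ha : 0 ≤ a) (hs : Summable a) (M N : Set α) :
    ∑' k, (M ∪ N).indicator a k ≤ ∑' k, M.indicator a k + ∑' k, N.indicator a k := by
  rw [← (hs.indicator M).tsum_add (hs.indicator N)]
  refine (hs.indicator _).tsum_le_tsum (fun k => ?_) ((hs.indicator M).add (hs.indicator N))
  rw [← Set.indicator_union_add_inter_apply]
  exact le_add_of_nonneg_right (Set.indicator_nonneg (fun k _ => ha k) k)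

end IndicatorSums

section DensityZero

variable {I : Set (Set ℕ)} {A : ℕ → ℕ → ℝ} {M N : Set ℕ}

lemma aiDensity_zero_iff (hA : RegularMatrix A) :
    AIDensity I A M 0 ↔ ∀ ε > 0, {n | ε ≤ ∑' k, M.indicator (A n) k} ∈ I := by
  simp only [AIDensity, ILim, sub_zero, abs_of_nonneg (tsum_indicator_nonneg (hA.nonneg _) _)]

lemma aiDensity_zero_empty (hI : AdmissibleIdeal I) : AIDensity I A ∅ 0 := fun ε hε => by
  simpa [not_le.mpr hε] using hI.finite_mem Set.finite_empty

lemma AIDensity.zero_of_subset (hA : RegularMatrix A) (hI : AdmissibleIdeal I)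
    (hN : AIDensity I A N 0) (h : M ⊆ N) : AIDensity I A M 0 := by
  rw [aiDensity_zero_iff hA] at hN ⊢
  exact fun ε hε => hI.subset_mem (hN ε hε) fun n hn =>
    hn.trans (tsum_indicator_mono (hA.nonneg n) (hA.summable n) h)

lemma AIDensity.zero_union (hA : RegularMatrix A) (hI : AdmissibleIdeal I)
    (hM : AIDensity I A M 0) (hN : AIDensity I A N 0) : AIDensity I A (M ∪ N) 0 := by
  rw [aiDensity_zero_iff hA] at hM hN ⊢
  intro ε hε
  refine hI.subset_mem (hI.union_mem (hM (ε / 2) (half_pos hε)) (hN (ε / 2) (half_pos hε)))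
    fun n hn => ?_
  simp only [Set.mem_union, Set.mem_ofPred_eq] at hn ⊢
  by_contra! hsmall
  linarith [tsum_indicator_union_le (hA.nonneg n) (hA.summable n) M N]

lemma aiDensity_zero_biUnion {ι : Type*} (hA : RegularMatrix A) (hI : AdmissibleIdeal I)
    (t : Finset ι) {f : ι → Set ℕ} (h : ∀ i ∈ t, AIDensity I A (f i) 0) :
    AIDensity I A (⋃ i ∈ t, f i) 0 := by
  classical
  induction t using Finset.induction_on with
  | empty => simpa using aiDensity_zero_empty hI
  | insert i t _ ih =>
    rw [Finset.set_biUnion_insert]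
    exact (h i (Finset.mem_insert_self i t)).zero_union hA hI
      (ih fun j hj => h j (Finset.mem_insert_of_mem hj))

end DensityZero

theorem stmt_17 {X : Type*} [MetricSpace X] (A : ℕ → ℕ → ℝ) (I : Set (Set ℕ))
    (hA : RegularMatrix A) (hI : AdmissibleIdeal I) (x : ℕ → X) (C : Set X)
    (hC : IsCompact C) (hdisj : C ∩ AIStatClusterPts I A x = ∅) :
    AIDensity I A {k : ℕ | x k ∈ C} 0 := by
  have hball : ∀ ν ∈ C, ∃ ε > 0, AIDensity I A {k | dist (x k) ν < ε} 0 := fun ν hν => by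
    have : ν ∉ AIStatClusterPts I A x := fun h =>
      Set.eq_empty_iff_forall_notMem.mp hdisj ν ⟨hν, h⟩
    simpa [AIStatClusterPts] using this
  choose! ε hε hεA using hball
  obtain ⟨t, htC, hCt⟩ := hC.elim_nhds_subcover (fun ν => Metric.ball ν (ε ν))
    fun ν hν => Metric.ball_mem_nhds ν (hε ν hν)
  refine (aiDensity_zero_biUnion hA hI t fun ν hν => hεA ν (htC ν hν)).zero_of_subset hA hI
    fun k hk => ?_
  simpa using hCt hk
end
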